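/- arXiv:1807.04956 — 4 statements merged into one kernel-verified Lean document; each statement's English description precedes it below -/
import Mathlib

section
/- Let ρ be a density matrix on C²⊗C² and let Φ = |φ⁺⟩⟨φ⁺| with |φ⁺⟩ = (|00⟩+|11⟩)/√2. If Tr(ρΦ) ≥ c for some c ∈ [1/2, 1], then every eigenvalue λ of the reduced state ρ_A = Tr_B(ρ) satisfies (1−η)/2 ≤ λ ≤ (1+η)/2, where η = 2√(c(1−c)). -/
open Matrix Kronecker ComplexOrder

noncomputable section

/-- Partial trace over the second tensor factor. -/
def ptraceB {α β : Type*} [Fintype β] (ρ : Matrix (α × β) (α × β) ℂ) : Matrix α α ℂ :=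
  Matrix.of fun a a' => ∑ b, ρ (a, b) (a', b)

/-- The maximally entangled state vector (|00⟩+|11⟩)/√2. -/
def bellPlusVec : Fin 2 × Fin 2 → ℂ :=
  fun p => if p.1 = p.2 then ((Real.sqrt 2)⁻¹ : ℝ) else 0

/-- The projector Φ = |φ⁺⟩⟨φ⁺|. -/
def phiPlus : Matrix (Fin 2 × Fin 2) (Fin 2 × Fin 2) ℂ :=
  Matrix.vecMulVec bellPlusVec (star bellPlusVec)

/-!
Let `u_k` be orthonormal eigenvectors of `ρ_A` with eigenvalues `λ_k`. For any orthonormal basis the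
unnormalized maximally entangled vector is `Ω = ∑ₖ u_k ⊗ ū_k`, so the triangle inequality for the
seminorm `x ↦ √⟨x, ρ x⟩` gives `⟨Ω, ρ Ω⟩ ≤ (∑ₖ √⟨u_k ⊗ ū_k, ρ (u_k ⊗ ū_k)⟩)²`, and each term is at
most `⟨u_k, ρ_A u_k⟩ = λ_k`: taking the partial trace in the basis `(ū_j)` writes `⟨u_k, ρ_A u_k⟩`
as the sum of the nonnegative terms `⟨u_k ⊗ ū_j, ρ (u_k ⊗ ū_j)⟩`. For two qubits this reads `2c ≤ (√λ₀ + √λ₁)² = 1 + 2√(λ₀λ₁)`, which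
together with `λ₀ + λ₁ = 1` rearranges to `(2λ - 1)² ≤ 4c(1 - c)`.
-/

def tensorVec {α β : Type*} (v : α → ℂ) (w : β → ℂ) : α × β → ℂ :=
  fun p => v p.1 * w p.2

def maxEntangledVec (n : Type*) [DecidableEq n] : n × n → ℂ :=
  fun p => (1 : Matrix n n ℂ) p.1 p.2

section PartialTrace

variable {α β ι : Type*} [Fintype β]

theorem isHermitian_ptraceB {ρ : Matrix (α × β) (α × β) ℂ} (hρ : ρ.IsHermitian) :
    (ptraceB ρ).IsHermitian := by
  ext a a'
  simp only [conjTranspose_apply, ptraceB, of_apply, star_sum]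
  exact Finset.sum_congr rfl fun b _ => congrFun (congrFun hρ (a, b)) (a', b)

variable [Fintype α] [Fintype ι]

theorem trace_ptraceB (ρ : Matrix (α × β) (α × β) ℂ) : (ptraceB ρ).trace = ρ.trace := by
  simp [Matrix.trace, ptraceB, Fintype.sum_prod_type]

theorem dotProduct_ptraceB_mulVec [DecidableEq β] (ρ : Matrix (α × β) (α × β) ℂ)
    (F : Matrix ι β ℂ) (hF : Fᴴ * F = 1) (v : α → ℂ) :
    star v ⬝ᵥ ptraceB ρ *ᵥ v = ∑ k, star (tensorVec v (F k)) ⬝ᵥ ρ *ᵥ tensorVec v (F k) := by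
  have hF' (b b' : β) : ∑ k, star (F k b) * F k b' = if b = b' then 1 else 0 := by
    simpa [mul_apply, one_apply] using congrFun (congrFun hF b) b'
  symm
  calc ∑ k, star (tensorVec v (F k)) ⬝ᵥ ρ *ᵥ tensorVec v (F k)
      = ∑ p, ∑ q, star (v p.1) * ρ p q * v q.1 * ∑ k, star (F k p.2) * F k q.2 := by
        simp only [dotProduct, mulVec, tensorVec, Pi.star_apply, star_mul', Finset.mul_sum]
        rw [Finset.sum_comm]
        refine Finset.sum_congr rfl fun p _ => ?_
        rw [Finset.sum_comm]
        refine Finset.sum_congr rfl fun q _ => Finset.sum_congr rfl fun k _ => ?_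
        ring
    _ = star v ⬝ᵥ ptraceB ρ *ᵥ v := by
        simp only [hF', mul_ite, mul_one, mul_zero, Fintype.sum_prod_type, Finset.sum_ite_eq,
          Finset.mem_univ, if_true, dotProduct, mulVec, ptraceB, of_apply, Pi.star_apply,
          Finset.mul_sum, Finset.sum_mul]
        refine Finset.sum_congr rfl fun a _ => ?_
        rw [Finset.sum_comm]
        simp only [mul_assoc]

variable [DecidableEq β] {ρ : Matrix (α × β) (α × β) ℂ}

theorem Matrix.PosSemidef.dotProduct_tensorVec_le (hρ : ρ.PosSemidef) {F : Matrix ι β ℂ}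
    (hF : Fᴴ * F = 1) (v : α → ℂ) (k : ι) :
    star (tensorVec v (F k)) ⬝ᵥ ρ *ᵥ tensorVec v (F k) ≤ star v ⬝ᵥ ptraceB ρ *ᵥ v := by
  rw [dotProduct_ptraceB_mulVec ρ F hF]
  exact Finset.single_le_sum (f := fun k => star (tensorVec v (F k)) ⬝ᵥ ρ *ᵥ tensorVec v (F k))
    (fun k _ => hρ.dotProduct_mulVec_nonneg _) (Finset.mem_univ k)

theorem posSemidef_ptraceB (hρ : ρ.PosSemidef) : (ptraceB ρ).PosSemidef := by
  refine .of_dotProduct_mulVec_nonneg (isHermitian_ptraceB hρ.isHermitian) fun v => ?_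
  rw [dotProduct_ptraceB_mulVec ρ (1 : Matrix β β ℂ) (by simp)]
  exact Finset.sum_nonneg fun k _ => hρ.dotProduct_mulVec_nonneg _

end PartialTrace

theorem sum_tensorVec_transpose_conjTranspose {n m : Type*} [Fintype m] (U : Matrix n m ℂ) :
    ∑ k, tensorVec (Uᵀ k) (Uᴴ k) = fun p => (U * Uᴴ) p.1 p.2 := by
  ext p
  simp [tensorVec, mul_apply, Finset.sum_apply]

theorem re_dotProduct_conjTranspose_mul_self_mulVec {m n : Type*} [Fintype m] [Fintype n]
    (B : Matrix m n ℂ) (x : n → ℂ) :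
    (star x ⬝ᵥ (Bᴴ * B) *ᵥ x).re = ‖WithLp.toLp 2 (B *ᵥ x)‖ ^ 2 := by
  rw [← mulVec_mulVec, dotProduct_mulVec, ← star_mulVec, ← dotProduct_comm,
    ← EuclideanSpace.inner_toLp_toLp]
  exact (norm_sq_eq_re_inner (𝕜 := ℂ) _).symm

open scoped MatrixOrder in
theorem Matrix.PosSemidef.re_dotProduct_sum_mulVec_sum_le {n ι : Type*} [Fintype n] [DecidableEq n]
    {ρ : Matrix n n ℂ} (hρ : ρ.PosSemidef) (s : Finset ι) (x : ι → n → ℂ) :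
    (star (∑ k ∈ s, x k) ⬝ᵥ ρ *ᵥ ∑ k ∈ s, x k).re
      ≤ (∑ k ∈ s, √(star (x k) ⬝ᵥ ρ *ᵥ x k).re) ^ 2 := by
  obtain ⟨B, rfl⟩ : ∃ B : Matrix n n ℂ, ρ = Bᴴ * B :=
    CStarAlgebra.nonneg_iff_eq_star_mul_self.mp (nonneg_iff_posSemidef.mpr hρ)
  simp_rw [re_dotProduct_conjTranspose_mul_self_mulVec, Real.sqrt_sq (norm_nonneg _),
    mulVec_sum, WithLp.toLp_sum]
  gcongr
  exact norm_sum_le _ _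

theorem Matrix.PosSemidef.re_dotProduct_maxEntangledVec_le {n : Type*} [Fintype n] [DecidableEq n]
    {ρ : Matrix (n × n) (n × n) ℂ} (hρ : ρ.PosSemidef) (hA : (ptraceB ρ).IsHermitian) :
    (star (maxEntangledVec n) ⬝ᵥ ρ *ᵥ maxEntangledVec n).re
      ≤ (∑ k, √(hA.eigenvalues k)) ^ 2 := by
  set U : Matrix n n ℂ := (hA.eigenvectorUnitary : Matrix n n ℂ)
  have hU : U * Uᴴ = 1 := mem_unitaryGroup_iff.mp hA.eigenvectorUnitary.2
  have hΩ : maxEntangledVec n = ∑ k, tensorVec (Uᵀ k) (Uᴴ k) := by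
    rw [sum_tensorVec_transpose_conjTranspose, hU]
    rfl
  have hk (k : n) : (star (tensorVec (Uᵀ k) (Uᴴ k)) ⬝ᵥ ρ *ᵥ tensorVec (Uᵀ k) (Uᴴ k)).re
      ≤ hA.eigenvalues k := by
    rw [hA.eigenvalues_eq k, ← IsHermitian.eigenvectorUnitary_transpose_apply]
    exact (Complex.le_def.mp
      (hρ.dotProduct_tensorVec_le (F := Uᴴ) (by rwa [conjTranspose_conjTranspose]) _ k)).1
  rw [hΩ]
  calc _ ≤ (∑ k, √(star (tensorVec (Uᵀ k) (Uᴴ k)) ⬝ᵥ ρ *ᵥ tensorVec (Uᵀ k) (Uᴴ k)).re) ^ 2 :=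
        hρ.re_dotProduct_sum_mulVec_sum_le _ _
    _ ≤ (∑ k, √(hA.eigenvalues k)) ^ 2 := by gcongr with k; exact hk k

theorem bellPlusVec_eq :
    bellPlusVec = (((√2)⁻¹ : ℝ) : ℂ) • maxEntangledVec (Fin 2) := by
  ext p
  simp [bellPlusVec, maxEntangledVec, one_apply]

theorem trace_mul_phiPlus (ρ : Matrix (Fin 2 × Fin 2) (Fin 2 × Fin 2) ℂ) :
    (ρ * phiPlus).trace = (star (maxEntangledVec (Fin 2)) ⬝ᵥ ρ *ᵥ maxEntangledVec (Fin 2)) / 2 := by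
  rw [phiPlus, mul_vecMulVec, trace_vecMulVec, dotProduct_comm, bellPlusVec_eq]
  simp only [star_smul, mulVec_smul, smul_dotProduct, dotProduct_smul, smul_eq_mul,
    Complex.star_def, Complex.conj_ofReal]
  rw [← mul_assoc, ← Complex.ofReal_mul, ← mul_inv, Real.mul_self_sqrt zero_le_two]
  push_cast
  ring

theorem abs_two_mul_sub_one_le {l l' c : ℝ} (hl : 0 ≤ l) (hl' : 0 ≤ l') (hsum : l + l' = 1)
    (hc : 1 / 2 ≤ c) (hc1 : c ≤ 1) (h : 2 * c ≤ (√l + √l') ^ 2) :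
    |2 * l - 1| ≤ 2 * √(c * (1 - c)) := by
  have hs := Real.sq_sqrt hl
  have ht := Real.sq_sqrt hl'
  have hq := Real.sq_sqrt (show 0 ≤ c * (1 - c) by nlinarith)
  have hst : 2 * c - 1 ≤ 2 * (√l * √l') := by nlinarith
  refine abs_le_of_sq_le_sq ?_ (by positivity)
  nlinarith [mul_nonneg (Real.sqrt_nonneg l) (Real.sqrt_nonneg l')]

theorem fidelity_marginal_tradeoff
    (ρ : Matrix (Fin 2 × Fin 2) (Fin 2 × Fin 2) ℂ)
    (hρ : ρ.PosSemidef) (htr : ρ.trace = 1)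
    (c : ℝ) (hc : c ∈ Set.Icc (1/2 : ℝ) 1)
    (hfid : (c : ℂ) ≤ (ρ * phiPlus).trace)
    (hA : (ptraceB ρ).IsHermitian) :
    ∀ i, (1 - 2 * Real.sqrt (c * (1 - c))) / 2 ≤ hA.eigenvalues i ∧
      hA.eigenvalues i ≤ (1 + 2 * Real.sqrt (c * (1 - c))) / 2 := by
  have hnonneg (k : Fin 2) : 0 ≤ hA.eigenvalues k := (posSemidef_ptraceB hρ).eigenvalues_nonneg k
  have hsum : hA.eigenvalues 0 + hA.eigenvalues 1 = 1 := by
    have := hA.trace_eq_sum_eigenvalues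
    rw [trace_ptraceB, htr, Fin.sum_univ_two] at this
    simpa using congrArg RCLike.re this.symm
  have hfid' : 2 * c ≤ (√(hA.eigenvalues 0) + √(hA.eigenvalues 1)) ^ 2 := by
    have hre := (Complex.le_def.mp hfid).1
    rw [trace_mul_phiPlus, Complex.div_ofNat_re, Complex.ofReal_re] at hre
    have := hρ.re_dotProduct_maxEntangledVec_le hA
    rw [Fin.sum_univ_two] at this
    linarith
  have key : ∀ i, |2 * hA.eigenvalues i - 1| ≤ 2 * √(c * (1 - c)) := Fin.forall_fin_two.mpr
    ⟨abs_two_mul_sub_one_le (hnonneg 0) (hnonneg 1) hsum hc.1 hc.2 hfid',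
      abs_two_mul_sub_one_le (hnonneg 1) (hnonneg 0) (by rwa [add_comm]) hc.1 hc.2
        (by rwa [add_comm])⟩
  intro i
  constructor <;> linarith [abs_le.mp (key i)]
end
end

section
/- Let P = (|e_j⟩⟨e_j|)_{j=1}^d be a rank-1 projective measurement on H₁⊗H₂ (with dim H₁·dim H₂ = d), and let α_max be the largest Schmidt coefficient among all the states |e_j⟩. Then for any separable POVM F = (F^j)_{j=1}^d on H₁⊗H₂, (1/d)·Σ_j Tr(F^j |e_j⟩⟨e_j|) ≤ α_max². -/
/-!
For a product state `u ⊗ v` the Schmidt decomposition gives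
`⟨e|u ⊗ v⟩ = ∑ₗ αₗ ⟨aₗ|u⟩ ⟨bₗ|v⟩`, so Cauchy–Schwarz and Bessel's inequality bound
`|⟨e|u ⊗ v⟩|²` by `α_max²`. Hence `Tr (F |e⟩⟨e|) ≤ α_max² Tr F` for every separable `F`, and
summing over `j` with `∑ⱼ Tr Fʲ = Tr 1 = d` gives the bound.
-/

open Matrix ComplexOrder

noncomputable section

/-- A separable measurement operator on a bipartite system: a nonnegative
combination of projectors onto (unit) product states. -/
def IsSeparableOp {n₁ n₂ : ℕ} (F : Matrix (Fin n₁ × Fin n₂) (Fin n₁ × Fin n₂) ℂ) : Prop :=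
  ∃ (K : ℕ) (lam : Fin K → ℝ) (u : Fin K → Fin n₁ → ℂ) (v : Fin K → Fin n₂ → ℂ),
    (∀ k, 0 ≤ lam k) ∧ (∀ k, ∑ i, ‖u k i‖ ^ 2 = 1) ∧
    (∀ k, ∑ i, ‖v k i‖ ^ 2 = 1) ∧
    F = ∑ k, (lam k : ℂ) •
      Matrix.vecMulVec (fun p => u k p.1 * v k p.2) (star fun p => u k p.1 * v k p.2)

lemma re_trace_vecMulVec_mul_vecMulVec {ι : Type*} [Fintype ι] (ψ e : ι → ℂ) :
    (vecMulVec ψ (star ψ) * vecMulVec e (star e)).trace.re = ‖star e ⬝ᵥ ψ‖ ^ 2 := by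
  rw [vecMulVec_mul_vecMulVec, trace_vecMulVec, dotProduct_smul, smul_eq_mul, dotProduct_comm ψ,
    star_dotProduct, ← starRingEnd_apply, Complex.conj_mul']
  norm_cast

lemma re_trace_vecMulVec {ι : Type*} [Fintype ι] (ψ : ι → ℂ) :
    (vecMulVec ψ (star ψ)).trace.re = ∑ i, ‖ψ i‖ ^ 2 := by
  simp [trace_vecMulVec, dotProduct, Complex.re_sum, Complex.mul_conj, Complex.sq_norm]

lemma sum_norm_sq_star_dotProduct_le {ι κ : Type*} [Fintype ι] [Fintype κ] [DecidableEq κ]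
    (a : κ → ι → ℂ) (ha : ∀ l l', star (a l) ⬝ᵥ a l' = if l = l' then 1 else 0) (u : ι → ℂ) :
    ∑ l, ‖star (a l) ⬝ᵥ u‖ ^ 2 ≤ ∑ i, ‖u i‖ ^ 2 := by
  have hON : Orthonormal ℂ fun l => WithLp.toLp 2 (a l) := by
    rw [orthonormal_iff_ite]
    intro l l'
    simpa [EuclideanSpace.inner_eq_star_dotProduct, dotProduct_comm] using ha l l'
  have bessel := hON.sum_inner_products_le (s := Finset.univ) (WithLp.toLp 2 u)
  rw [EuclideanSpace.norm_eq, Real.sq_sqrt (by positivity)] at bessel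
  simpa [EuclideanSpace.inner_eq_star_dotProduct, dotProduct_comm] using bessel

lemma star_dotProduct_schmidt_product {ι₁ ι₂ κ : Type*} [Fintype ι₁] [Fintype ι₂] [Fintype κ]
    (α : κ → ℝ) (a : κ → ι₁ → ℂ) (b : κ → ι₂ → ℂ) (u : ι₁ → ℂ) (v : ι₂ → ℂ) :
    star (fun p : ι₁ × ι₂ => ∑ l, (α l : ℂ) * a l p.1 * b l p.2) ⬝ᵥ (fun p => u p.1 * v p.2)
      = ∑ l, (α l : ℂ) * ((star (a l) ⬝ᵥ u) * (star (b l) ⬝ᵥ v)) := by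
  simp only [dotProduct, Fintype.sum_prod_type, Pi.star_apply, star_sum, star_mul',
    Complex.star_def, Complex.conj_ofReal, Finset.sum_mul, Finset.mul_sum]
  rw [Finset.sum_comm]
  conv_lhs => enter [2, m]; rw [Finset.sum_comm]
  rw [Finset.sum_comm]
  refine Finset.sum_congr rfl fun l _ => Finset.sum_congr rfl fun m _ =>
    Finset.sum_congr rfl fun i _ => by ring

lemma norm_sq_star_dotProduct_schmidt_product_le {ι₁ ι₂ κ : Type*} [Fintype ι₁] [Fintype ι₂]
    [Fintype κ] [DecidableEq κ] (α : κ → ℝ) (a : κ → ι₁ → ℂ) (b : κ → ι₂ → ℂ) {c : ℝ}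
    (hα : ∀ l, 0 ≤ α l) (hαc : ∀ l, α l ≤ c)
    (ha : ∀ l l', star (a l) ⬝ᵥ a l' = if l = l' then 1 else 0)
    (hb : ∀ l l', star (b l) ⬝ᵥ b l' = if l = l' then 1 else 0) (u : ι₁ → ℂ) (v : ι₂ → ℂ) :
    ‖star (fun p : ι₁ × ι₂ => ∑ l, (α l : ℂ) * a l p.1 * b l p.2) ⬝ᵥ (fun p => u p.1 * v p.2)‖ ^ 2
      ≤ c ^ 2 * (∑ i, ‖u i‖ ^ 2) * ∑ i, ‖v i‖ ^ 2 := by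
  set x := fun l => star (a l) ⬝ᵥ u
  set y := fun l => star (b l) ⬝ᵥ v
  have htriangle : ‖∑ l, (α l : ℂ) * (x l * y l)‖ ≤ c * ∑ l, ‖x l‖ * ‖y l‖ := calc
    _ ≤ ∑ l, α l * (‖x l‖ * ‖y l‖) := by
      refine (norm_sum_le _ _).trans_eq (Finset.sum_congr rfl fun l _ => ?_)
      rw [norm_mul, norm_mul, Complex.norm_of_nonneg (hα l)]
    _ ≤ ∑ l, c * (‖x l‖ * ‖y l‖) :=
      Finset.sum_le_sum fun l _ => mul_le_mul_of_nonneg_right (hαc l) (by positivity)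
    _ = c * ∑ l, ‖x l‖ * ‖y l‖ := (Finset.mul_sum ..).symm
  rw [star_dotProduct_schmidt_product]
  calc _ ≤ (c * ∑ l, ‖x l‖ * ‖y l‖) ^ 2 := pow_le_pow_left₀ (norm_nonneg _) htriangle 2
    _ = c ^ 2 * (∑ l, ‖x l‖ * ‖y l‖) ^ 2 := mul_pow ..
    _ ≤ c ^ 2 * ((∑ l, ‖x l‖ ^ 2) * ∑ l, ‖y l‖ ^ 2) := by
      gcongr; exact Finset.sum_mul_sq_le_sq_mul_sq _ _ _
    _ ≤ c ^ 2 * (∑ i, ‖u i‖ ^ 2) * ∑ i, ‖v i‖ ^ 2 := by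
      rw [mul_assoc]
      gcongr
      exacts [sum_norm_sq_star_dotProduct_le a ha u, sum_norm_sq_star_dotProduct_le b hb v]

lemma IsSeparableOp.re_trace_mul_vecMulVec_le {n₁ n₂ : ℕ}
    {F : Matrix (Fin n₁ × Fin n₂) (Fin n₁ × Fin n₂) ℂ} (hF : IsSeparableOp F)
    (e : Fin n₁ × Fin n₂ → ℂ) {c : ℝ}
    (hc : ∀ (u : Fin n₁ → ℂ) (v : Fin n₂ → ℂ), ∑ i, ‖u i‖ ^ 2 = 1 → ∑ i, ‖v i‖ ^ 2 = 1 →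
      ‖star e ⬝ᵥ (fun p => u p.1 * v p.2)‖ ^ 2 ≤ c) :
    (F * vecMulVec e (star e)).trace.re ≤ c * F.trace.re := by
  obtain ⟨K, lam, u, v, hlam, hu, hv, rfl⟩ := hF
  have hunit : ∀ k, ∑ p : Fin n₁ × Fin n₂, ‖u k p.1 * v k p.2‖ ^ 2 = 1 := fun k => by
    simp only [Fintype.sum_prod_type, norm_mul, mul_pow, ← Finset.sum_mul_sum, hu, hv, one_mul]
  simp only [Finset.sum_mul, trace_sum, smul_mul_assoc, trace_smul, smul_eq_mul, Complex.re_sum,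
    Complex.re_ofReal_mul, re_trace_vecMulVec_mul_vecMulVec, re_trace_vecMulVec, hunit, mul_one,
    Finset.mul_sum]
  exact Finset.sum_le_sum fun k _ => by
    rw [mul_comm c]; exact mul_le_mul_of_nonneg_left (hc _ _ (hu k) (hv k)) (hlam k)

theorem separable_povm_bound_general (n₁ n₂ d r : ℕ) (hd : d = n₁ * n₂)
    (e : Fin d → Fin n₁ × Fin n₂ → ℂ)
    -- Schmidt decompositions of the e_j
    (α : Fin d → Fin r → ℝ) (a : Fin d → Fin r → Fin n₁ → ℂ) (b : Fin d → Fin r → Fin n₂ → ℂ)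
    (hα : ∀ j l, 0 ≤ α j l)
    (haON : ∀ j l l', ∑ i, (starRingEnd ℂ) (a j l i) * a j l' i = if l = l' then 1 else 0)
    (hbON : ∀ j l l', ∑ i, (starRingEnd ℂ) (b j l i) * b j l' i = if l = l' then 1 else 0)
    (hdec : ∀ j, e j = fun p => ∑ l, (α j l : ℂ) * a j l p.1 * b j l p.2)
    (αmax : ℝ) (hαmax : IsGreatest {x : ℝ | ∃ j l, x = α j l} αmax)
    -- the separable POVM
    (F : Fin d → Matrix (Fin n₁ × Fin n₂) (Fin n₁ × Fin n₂) ℂ)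
    (hFsep : ∀ j, IsSeparableOp (F j)) (hFsum : ∑ j, F j = 1) :
    (1 / d : ℝ) * ∑ j, ((F j * Matrix.vecMulVec (e j) (star (e j))).trace).re ≤ αmax ^ 2 := by
  have hF : ∀ j, (F j * vecMulVec (e j) (star (e j))).trace.re ≤ αmax ^ 2 * (F j).trace.re :=
    fun j => (hFsep j).re_trace_mul_vecMulVec_le (e j) fun u v hu hv => by
      simpa [hdec j, hu, hv] using norm_sq_star_dotProduct_schmidt_product_le (α j) (a j) (b j)
        (hα j) (fun l => hαmax.2 ⟨j, l, rfl⟩) (haON j) (hbON j) u v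
  have htrace : ∑ j, (F j).trace.re = d := by
    rw [← Complex.re_sum, ← trace_sum, hFsum, trace_one, hd]
    simp
  obtain ⟨j₀, -, -⟩ := hαmax.1
  have hd_pos : (0 : ℝ) < d := by exact_mod_cast j₀.pos
  calc _ ≤ (1 / d : ℝ) * ∑ j, αmax ^ 2 * (F j).trace.re := by gcongr with j; exact hF j
    _ = αmax ^ 2 := by rw [← Finset.mul_sum, htrace]; field_simp

theorem separable_povm_bound (n₁ n₂ d r : ℕ) (hd : d = n₁ * n₂)
    (e : Fin d → Fin n₁ × Fin n₂ → ℂ)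
    -- the rank-1 projectors |e_j⟩⟨e_j| form a projective measurement
    (hsum : ∑ j, Matrix.vecMulVec (e j) (star (e j)) = 1)
    (hunit : ∀ j, ∑ p, ‖e j p‖ ^ 2 = 1)
    -- Schmidt decompositions of the e_j
    (α : Fin d → Fin r → ℝ) (a : Fin d → Fin r → Fin n₁ → ℂ) (b : Fin d → Fin r → Fin n₂ → ℂ)
    (hα : ∀ j l, 0 ≤ α j l)
    (haON : ∀ j l l', ∑ i, (starRingEnd ℂ) (a j l i) * a j l' i = if l = l' then 1 else 0)
    (hbON : ∀ j l l', ∑ i, (starRingEnd ℂ) (b j l i) * b j l' i = if l = l' then 1 else 0)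
    (hdec : ∀ j, e j = fun p => ∑ l, (α j l : ℂ) * a j l p.1 * b j l p.2)
    (αmax : ℝ) (hαmax : IsGreatest {x : ℝ | ∃ j l, x = α j l} αmax)
    -- the separable POVM
    (F : Fin d → Matrix (Fin n₁ × Fin n₂) (Fin n₁ × Fin n₂) ℂ)
    (hFsep : ∀ j, IsSeparableOp (F j)) (hFsum : ∑ j, F j = 1) :
    (1 / d : ℝ) * ∑ j, ((F j * Matrix.vecMulVec (e j) (star (e j))).trace).re ≤ αmax ^ 2 :=
  separable_povm_bound_general n₁ n₂ d r hd e α a b hα haON hbON hdec αmax hαmax F hFsep hFsum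
end
end

section
/- Consider the semidefinite program: maximize Tr(σ_z ρ_A) over two-qubit density matrices ρ subject to Tr(Φ⁺ρ) ≥ c, for c ∈ [1/2,1). The dual feasibility condition λ₁I ≥ λ₂Φ⁺ + σ_z⊗I with λ₂ ≥ 0 is satisfied by λ₁ = √(c/(1−c)), λ₂ = (2c−1)/√(c(1−c)), and yields λ₁ − λ₂c = 2√(c(1−c)); hence Tr(σ_z ρ_A) ≤ 2√(c(1−c)) for any feasible ρ. -/
open Matrix Kronecker ComplexOrder

noncomputable section

def pauliZ : Matrix (Fin 2) (Fin 2) ℂ := !![1, 0; 0, -1]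

/-! The slack matrix `S = λ₁ I - λ₂ Φ⁺ - σ_z ⊗ I` is block diagonal in the computational basis:
it is `λ₁ ∓ 1` on `|01⟩, |10⟩`, and on `span {|00⟩, |11⟩}` it is the `2 × 2` block with diagonal
`λ₁ - λ₂/2 ∓ 1` and off-diagonal `-λ₂/2`, of determinant `λ₁ (λ₁ - λ₂) - 1`. The chosen `λ`s make
this determinant vanish, so the block is a rank-one `w w*` and `S ≥ 0`. Weak duality is
`Tr (S ρ) ≥ 0` for `ρ ≥ 0`, together with `Tr ((σ_z ⊗ I) ρ) = Tr (σ_z ρ_A)`. -/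

open scoped MatrixOrder in
lemma Matrix.PosSemidef.trace_mul_nonneg {𝕜 n : Type*} [RCLike 𝕜] [Fintype n] [DecidableEq n]
    {A B : Matrix n n 𝕜} (hA : A.PosSemidef) (hB : B.PosSemidef) : 0 ≤ (A * B).trace := by
  obtain ⟨C, rfl⟩ := CStarAlgebra.nonneg_iff_eq_star_mul_self.mp hB.nonneg
  rw [← mul_assoc, trace_mul_cycle]
  exact (hA.mul_mul_conjTranspose_same C).trace_nonneg

lemma trace_mul_le_of_posSemidef_sub {𝕜 n : Type*} [RCLike 𝕜] [Fintype n] [DecidableEq n]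
    {O P ρ : Matrix n n 𝕜} {l₁ l₂ c : 𝕜}
    (hslack : (l₁ • 1 - l₂ • P - O).PosSemidef) (hl₂ : 0 ≤ l₂)
    (hρ : ρ.PosSemidef) (htr : ρ.trace = 1) (hc : c ≤ (P * ρ).trace) :
    (O * ρ).trace ≤ l₁ - l₂ * c := by
  have h := hslack.trace_mul_nonneg hρ
  rw [sub_mul, sub_mul, smul_mul, smul_mul, one_mul, trace_sub, trace_sub, trace_smul,
    trace_smul, htr, smul_eq_mul, smul_eq_mul, mul_one, sub_nonneg] at h
  calc (O * ρ).trace ≤ l₁ - l₂ * (P * ρ).trace := h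
    _ ≤ l₁ - l₂ * c := sub_le_sub_left (mul_le_mul_of_nonneg_left hc hl₂) _

lemma trace_kronecker_one_mul {n m : Type*} [Fintype n] [Fintype m] [DecidableEq m]
    (A : Matrix n n ℂ) (ρ : Matrix (n × m) (n × m) ℂ) :
    ((A ⊗ₖ (1 : Matrix m m ℂ)) * ρ).trace = (A * ptraceB ρ).trace := by
  simp only [trace, diag, mul_apply, ptraceB, of_apply, kroneckerMap_apply, one_apply,
    Fintype.sum_prod_type, mul_ite, mul_one, mul_zero, ite_mul, zero_mul, Finset.sum_ite_eq,
    Finset.mem_univ, if_true, Finset.mul_sum]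
  exact Finset.sum_congr rfl fun _ _ => Finset.sum_comm

def dualSlack (l₁ l₂ : ℝ) : Matrix (Fin 2 × Fin 2) (Fin 2 × Fin 2) ℂ :=
  (l₁ : ℂ) • 1 - (l₂ : ℂ) • phiPlus - pauliZ ⊗ₖ 1

lemma dualSlack_eq_vecMulVec_add_diagonal {l₁ l₂ α δ : ℝ} (hα : α ^ 2 = l₁ - l₂ / 2 - 1)
    (hδ : δ ^ 2 = l₁ - l₂ / 2 + 1) (hαδ : α * δ = l₂ / 2) :
    dualSlack l₁ l₂ = vecMulVec (Pi.single (0, 0) (α : ℂ) - Pi.single (1, 1) (δ : ℂ))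
          (star (Pi.single (0, 0) (α : ℂ) - Pi.single (1, 1) (δ : ℂ)))
        + diagonal (Pi.single (0, 1) ((l₁ : ℂ) - 1) + Pi.single (1, 0) ((l₁ : ℂ) + 1)) := by
  have hαC : (α : ℂ) * α = l₁ - l₂ / 2 - 1 := by rw [← sq]; exact_mod_cast hα
  have hδC : (δ : ℂ) * δ = l₁ - l₂ / 2 + 1 := by rw [← sq]; exact_mod_cast hδ
  have hαδC : (α : ℂ) * δ = l₂ / 2 := by exact_mod_cast hαδ
  have hsqrt2 : ((Real.sqrt 2 : ℝ) : ℂ)⁻¹ * ((Real.sqrt 2 : ℝ) : ℂ)⁻¹ = 1 / 2 := by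
    rw [← mul_inv, ← Complex.ofReal_mul, Real.mul_self_sqrt (by norm_num)]
    norm_num
  ext ⟨a, b⟩ ⟨a', b'⟩
  fin_cases a <;> fin_cases b <;> fin_cases a' <;> fin_cases b' <;>
    simp [dualSlack, phiPlus, bellPlusVec, pauliZ, vecMulVec_apply, one_apply, hsqrt2,
      hαC, hδC, hαδC, mul_comm (δ : ℂ), div_eq_mul_inv]

lemma posSemidef_dualSlack {l₁ l₂ : ℝ} (hl₁ : 0 ≤ l₁) (hl₂ : 0 ≤ l₂) (h : l₁ * (l₁ - l₂) = 1) :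
    (dualSlack l₁ l₂).PosSemidef := by
  have hl₂l₁ : l₂ < l₁ := by nlinarith
  have hm : 1 ≤ l₁ - l₂ / 2 := by nlinarith
  have hαδ : √(l₁ - l₂ / 2 - 1) * √(l₁ - l₂ / 2 + 1) = l₂ / 2 := by
    rw [← Real.sqrt_mul (by linarith),
      show (l₁ - l₂ / 2 - 1) * (l₁ - l₂ / 2 + 1) = (l₂ / 2) ^ 2 by linear_combination h,
      Real.sqrt_sq (by linarith)]
  rw [dualSlack_eq_vecMulVec_add_diagonal (Real.sq_sqrt (by linarith))
    (Real.sq_sqrt (by linarith)) hαδ]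
  refine (posSemidef_vecMulVec_self_star _).add (.diagonal ?_)
  have hl₁ : (1 : ℂ) ≤ l₁ := by exact_mod_cast (show (1 : ℝ) ≤ l₁ by linarith)
  exact add_nonneg (Pi.single_nonneg.2 (sub_nonneg.2 hl₁))
    (Pi.single_nonneg.2 (by linear_combination hl₁))

theorem sdp_duality_marginal_bound (c : ℝ) (hc : c ∈ Set.Ico (1/2 : ℝ) 1) :
    -- dual feasibility of λ₁ = √(c/(1−c)), λ₂ = (2c−1)/√(c(1−c))
    (0 ≤ (2 * c - 1) / Real.sqrt (c * (1 - c)) ∧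
      (((Real.sqrt (c / (1 - c)) : ℝ) : ℂ) • (1 : Matrix (Fin 2 × Fin 2) (Fin 2 × Fin 2) ℂ)
        - (((2 * c - 1) / Real.sqrt (c * (1 - c)) : ℝ) : ℂ) • phiPlus
        - pauliZ ⊗ₖ (1 : Matrix (Fin 2) (Fin 2) ℂ)).PosSemidef) ∧
    -- dual value
    Real.sqrt (c / (1 - c)) - ((2 * c - 1) / Real.sqrt (c * (1 - c))) * c
      = 2 * Real.sqrt (c * (1 - c)) ∧
    -- hence the primal bound
    (∀ ρ : Matrix (Fin 2 × Fin 2) (Fin 2 × Fin 2) ℂ, ρ.PosSemidef → ρ.trace = 1 →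
      (c : ℂ) ≤ (phiPlus * ρ).trace →
      (pauliZ * ptraceB ρ).trace ≤ ((2 * Real.sqrt (c * (1 - c)) : ℝ) : ℂ)) := by
  obtain ⟨hc_half, hc_one⟩ := hc
  have hc0 : 0 < c := by linarith
  set s := √(c * (1 - c))
  have hs0 : 0 < s := Real.sqrt_pos.2 (by nlinarith)
  have hs2 : s ^ 2 = c * (1 - c) := Real.sq_sqrt (by nlinarith)
  have hl₁ : √(c / (1 - c)) = c / s := by
    rw [show c / (1 - c) = c ^ 2 / (c * (1 - c)) by field_simp, Real.sqrt_div (sq_nonneg c),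
      Real.sqrt_sq hc0.le]
  have hl₂ : 0 ≤ (2 * c - 1) / s := div_nonneg (by linarith) hs0.le
  have hval : √(c / (1 - c)) - (2 * c - 1) / s * c = 2 * s := by
    rw [hl₁]
    field_simp
    linear_combination -2 * hs2
  have hdet : √(c / (1 - c)) * (√(c / (1 - c)) - (2 * c - 1) / s) = 1 := by
    rw [hl₁]
    field_simp
    linear_combination -hs2
  have hslack := posSemidef_dualSlack (Real.sqrt_nonneg _) hl₂ hdet
  refine ⟨⟨hl₂, hslack⟩, hval, fun ρ hρ htr hρc => ?_⟩
  rw [← trace_kronecker_one_mul]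
  calc _ ≤ _ := trace_mul_le_of_posSemidef_sub hslack (by exact_mod_cast hl₂) hρ htr hρc
    _ = _ := by rw [← hval]; push_cast; ring
end
end

section
/- The 4×4 matrix λ₁I − λ₂Φ⁺ − σ_z⊗I is positive semidefinite when λ₁ = √(c/(1−c)) and λ₂ = (2c−1)/√(c(1−c)) for c ∈ [1/2,1), where Φ⁺ is the projector onto (|00⟩+|11⟩)/√2. -/
/-! Write the matrix as `a I - l Φ⁺ - σ_z ⊗ I`. On `|01⟩` and `|10⟩` it is diagonal with entries
`a ∓ 1`; on `span {|00⟩, |11⟩}` it is the block `[[p - 1, -l/2], [-l/2, p + 1]]` with `p = a - l/2`,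
of determinant `a (a - l) - 1`. For `a = c/s`, `l = (2c - 1)/s`, `s = √(c(1 - c))`, this determinant
vanishes and `a ≥ 1`, so the matrix is a nonnegative diagonal matrix plus a positive multiple of a
rank-one projector. -/

open Matrix Kronecker ComplexOrder

noncomputable section

lemma phiPlus_apply (p q : Fin 2 × Fin 2) :
    phiPlus p q = if p.1 = p.2 ∧ q.1 = q.2 then 1 / 2 else 0 := by
  have h : ((Real.sqrt 2 : ℂ))⁻¹ * (Real.sqrt 2 : ℂ)⁻¹ = 1 / 2 := by
    rw [← mul_inv, ← Complex.ofReal_mul, Real.mul_self_sqrt zero_le_two, one_div]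
    norm_num
  by_cases hp : p.1 = p.2 <;> by_cases hq : q.1 = q.2 <;>
    simp [phiPlus, bellPlusVec, vecMulVec_apply, hp, hq, h]

def dualCertificate (a l : ℝ) : Matrix (Fin 2 × Fin 2) (Fin 2 × Fin 2) ℂ :=
  (a : ℂ) • 1 - (l : ℂ) • phiPlus - pauliZ ⊗ₖ 1

lemma dualCertificate_eq_diagonal_add_vecMulVec {a l : ℝ} (hal : a * (a - l) = 1)
    (hp : a - l / 2 + 1 ≠ 0) :
    dualCertificate a l =
      diagonal (fun q => ((![![0, a - 1], ![a + 1, 0]] q.1 q.2 : ℝ) : ℂ)) +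
        (((a - l / 2 + 1)⁻¹ : ℝ) : ℂ) •
          vecMulVec (fun q => ((![![-(l / 2), 0], ![0, a - l / 2 + 1]] q.1 q.2 : ℝ) : ℂ))
            (star fun q => ((![![-(l / 2), 0], ![0, a - l / 2 + 1]] q.1 q.2 : ℝ) : ℂ)) := by
  have hal' : (a : ℂ) * (a - l) = 1 := by exact_mod_cast hal
  have hp' : (a - l / 2 + 1 : ℂ) ≠ 0 := by exact_mod_cast hp
  ext ⟨i, j⟩ ⟨k, m⟩
  fin_cases i <;> fin_cases j <;> fin_cases k <;> fin_cases m <;>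
    simp [dualCertificate, phiPlus_apply, pauliZ, vecMulVec_apply, one_apply] <;> grind

theorem dualCertificate_posSemidef {a l : ℝ} (ha : 1 ≤ a) (hal : a * (a - l) = 1) :
    (dualCertificate a l).PosSemidef := by
  have hal_pos : 0 < a - l := pos_of_mul_pos_right (hal ▸ one_pos) (by linarith)
  have hp : 0 < a - l / 2 + 1 := by linarith
  rw [dualCertificate_eq_diagonal_add_vecMulVec hal hp.ne']
  refine .add ?_ ((posSemidef_vecMulVec_self_star _).smul ?_)
  · rw [posSemidef_diagonal_iff]
    rintro ⟨i, j⟩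
    rw [Complex.zero_le_real]
    fin_cases i <;> fin_cases j <;> simp <;> linarith
  · exact Complex.zero_le_real.mpr (inv_nonneg.mpr hp.le)

lemma sqrt_div_one_sub_eq_div_sqrt_mul {c : ℝ} (hc : 0 ≤ c) :
    √(c / (1 - c)) = c / √(c * (1 - c)) := by
  rw [Real.sqrt_div hc, Real.sqrt_mul hc, ← div_div, Real.div_sqrt]

theorem dual_certificate_psd (c : ℝ) (hc : c ∈ Set.Ico (1/2 : ℝ) 1) :
    (((Real.sqrt (c / (1 - c)) : ℝ) : ℂ) • (1 : Matrix (Fin 2 × Fin 2) (Fin 2 × Fin 2) ℂ)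
      - (((2 * c - 1) / Real.sqrt (c * (1 - c)) : ℝ) : ℂ) • phiPlus
      - pauliZ ⊗ₖ (1 : Matrix (Fin 2) (Fin 2) ℂ)).PosSemidef := by
  obtain ⟨hc₀, hc₁⟩ := hc
  have hs : 0 < √(c * (1 - c)) := Real.sqrt_pos.mpr (by nlinarith)
  have hs_sq : √(c * (1 - c)) ^ 2 = c * (1 - c) := Real.sq_sqrt (by nlinarith)
  have hs_le : √(c * (1 - c)) ≤ c := by
    calc √(c * (1 - c)) ≤ √(c * c) := Real.sqrt_le_sqrt (by nlinarith)
      _ = c := Real.sqrt_mul_self (by linarith)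
  refine dualCertificate_posSemidef (a := √(c / (1 - c))) ?_ ?_ <;>
    rw [sqrt_div_one_sub_eq_div_sqrt_mul (by linarith)]
  · exact (one_le_div hs).mpr hs_le
  · field_simp
    linear_combination -hs_sq
end
end
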